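/- Let G = (V, E) be a finite undirected graph and v0 ∉ V a fresh element. Consider the Boolean query q ⟵ R(x), S(x,y), R(y) with R endogenous and S exogenous, on the database instance with R = V ∪ {v0} and S containing one tuple (u,v) for each edge {u,v} ∈ E (in an arbitrary orientation) together with the tuple (v0,v0). Then the minimum size of a contingency set for the tuple v0 ∈ R equals the minimum size of a vertex cover of G. -/

import Mathlib

/-- An atom of a Boolean conjunctive query: a relation symbol applied to a
tuple (list) of variables, marked endogenous (`endo = true`) or exogenous. -/
structure DBAtom (Rel Var : Type) where
  rel : Rel
  args : List Var
  endo : Bool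
deriving DecidableEq

/-- A database tuple: it belongs to one relation and carries a tuple of constants. -/
structure DBTup (Rel Const : Type) where
  rel : Rel
  args : List Const
deriving DecidableEq

/-- The tuple obtained by applying a valuation `θ` to an atom. -/
def DBAtom.app {Rel Var Const : Type} (g : DBAtom Rel Var) (θ : Var → Const) :
    DBTup Rel Const :=
  ⟨g.rel, g.args.map θ⟩

/-- `dbSat D q` holds iff `D ⊨ q`: there is a valuation `θ` of the variables of `q`
into the domain with `θ(g) ∈ D` for every atom `g` of `q`. -/
def dbSat {Rel Var Const : Type} (D : Finset (DBTup Rel Const))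
    (q : Finset (DBAtom Rel Var)) : Prop :=
  ∃ θ : Var → Const, ∀ g ∈ q, g.app θ ∈ D

/-- `t` is an actual cause for `q` in `D` (with endogenous tuples `Dn`):
there is a contingency set `Γ ⊆ Dn` with `t ∉ Γ` such that
`D − Γ ⊨ q` and `D − Γ − {t} ⊭ q`. -/
def isActualCause {Rel Var Const : Type} [DecidableEq Rel] [DecidableEq Const]
    (q : Finset (DBAtom Rel Var)) (D Dn : Finset (DBTup Rel Const))
    (t : DBTup Rel Const) : Prop :=
  ∃ Γ : Finset (DBTup Rel Const), Γ ⊆ Dn ∧ t ∉ Γ ∧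
    dbSat (D \ Γ) q ∧ ¬ dbSat ((D \ Γ).erase t) q

/-- The n-lineage of `q` on `D`: the family of the sets `c^θ ∩ Dⁿ`
over all valuations `θ` with `θ(g) ∈ D` for all atoms `g` of `q`, where
`c^θ = {θ(g) : g an atom of q}`. -/
def nLineage {Rel Var Const : Type} [DecidableEq Rel] [DecidableEq Const]
    (q : Finset (DBAtom Rel Var)) (D Dn : Finset (DBTup Rel Const)) :
    Set (Finset (DBTup Rel Const)) :=
  {c | ∃ θ : Var → Const, (∀ g ∈ q, g.app θ ∈ D) ∧
    c = (q.image fun g => g.app θ) ∩ Dn}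

/-!
A contingency set for `R(v0)` may only delete tuples `R(v)` with `v ∈ V`, so it is `R(S)` for
some `S ⊆ V`. Deleting `R(S)` never touches the witness `x = y = v0`, so `D − R(S) ⊨ q`
always. Deleting `R(v0)` as well kills that witness, and every other one uses an edge
`S(u, v)` with `u, v ∈ V`; hence `D − R(S) − {R(v0)} ⊭ q` iff every edge `S(u, v)` loses `R(u)` or `R(v)`, i.e. iff `S` is a
vertex cover. Since `v ↦ R(v)` is injective, both minima range over the same cardinalities.
-/

def IsContingencySet {Rel Var Const : Type} [DecidableEq Rel] [DecidableEq Const]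
    (q : Finset (DBAtom Rel Var)) (D Dn : Finset (DBTup Rel Const))
    (t : DBTup Rel Const) (Γ : Finset (DBTup Rel Const)) : Prop :=
  Γ ⊆ Dn ∧ t ∉ Γ ∧ dbSat (D \ Γ) q ∧ ¬ dbSat ((D \ Γ).erase t) q

namespace VertexCoverReduction

variable {α : Type}

def rsrQuery : Finset (DBAtom (Fin 2) (Fin 2)) :=
  {⟨0, [0], true⟩, ⟨1, [0, 1], false⟩, ⟨0, [1], true⟩}

def tupR (v : α) : DBTup (Fin 2) α := ⟨0, [v]⟩

def tupS (x y : α) : DBTup (Fin 2) α := ⟨1, [x, y]⟩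

theorem tupR_injective : Function.Injective (tupR : α → DBTup (Fin 2) α) := by
  intro a b h
  simpa [tupR] using h

@[simp]
theorem tupR_inj {x y : α} : tupR x = tupR y ↔ x = y :=
  tupR_injective.eq_iff

@[simp]
theorem tupS_inj {a b x y : α} : tupS a b = tupS x y ↔ a = x ∧ b = y := by
  simp [tupS]

@[simp]
theorem tupR_ne_tupS (v x y : α) : tupR v ≠ tupS x y := by
  simp [tupR, tupS]

@[simp]
theorem tupS_ne_tupR (v x y : α) : tupS x y ≠ tupR v :=
  (tupR_ne_tupS v x y).symm

theorem dbSat_rsrQuery_iff (D : Finset (DBTup (Fin 2) α)) :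
    dbSat D rsrQuery ↔ ∃ x y, tupR x ∈ D ∧ tupS x y ∈ D ∧ tupR y ∈ D := by
  constructor
  · rintro ⟨θ, hθ⟩
    exact ⟨θ 0, θ 1, hθ ⟨0, [0], true⟩ (by simp [rsrQuery]),
      hθ ⟨1, [0, 1], false⟩ (by simp [rsrQuery]), hθ ⟨0, [1], true⟩ (by simp [rsrQuery])⟩
  · rintro ⟨x, y, hx, hxy, hy⟩
    refine ⟨![x, y], fun g hg => ?_⟩
    simp only [rsrQuery, Finset.mem_insert, Finset.mem_singleton] at hg
    rcases hg with rfl | rfl | rfl <;> assumption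

variable [DecidableEq α] (V : Finset α) (v0 : α) (O : Finset (α × α))

def endoDB : Finset (DBTup (Fin 2) α) := (insert v0 V).image tupR

def graphDB : Finset (DBTup (Fin 2) α) :=
  endoDB V v0 ∪ (insert (v0, v0) O).image fun p => tupS p.1 p.2

variable {V v0 O}

theorem tupR_mem_graphDB {x : α} : tupR x ∈ graphDB V v0 O ↔ x = v0 ∨ x ∈ V := by
  simp [graphDB, endoDB, tupR_injective.mem_finset_image]

theorem tupS_mem_graphDB {x y : α} :
    tupS x y ∈ graphDB V v0 O ↔ (x = v0 ∧ y = v0) ∨ (x, y) ∈ O := by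
  simp [graphDB, endoDB]

theorem exists_eq_image_tupR {Γ : Finset (DBTup (Fin 2) α)} (hΓ : Γ ⊆ endoDB V v0)
    (hv0 : tupR v0 ∉ Γ) : ∃ S ⊆ V, Γ = S.image tupR := by
  obtain ⟨S, hS, rfl⟩ := Finset.subset_image_iff.1 hΓ
  have hv0S : v0 ∉ S := fun h => hv0 (Finset.mem_image_of_mem _ h)
  exact ⟨S, (Finset.subset_insert_iff_of_notMem hv0S).1 hS, rfl⟩

theorem not_dbSat_erase_iff {S : Finset α} (hv0 : v0 ∉ V)
    (hOV : ∀ p ∈ O, p.1 ∈ V ∧ p.2 ∈ V) :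
    ¬ dbSat ((graphDB V v0 O \ S.image tupR).erase (tupR v0)) rsrQuery ↔
      ∀ p ∈ O, p.1 ∈ S ∨ p.2 ∈ S := by
  have hmemR : ∀ x, tupR x ∈ (graphDB V v0 O \ S.image tupR).erase (tupR v0) ↔
      x ≠ v0 ∧ x ∈ V ∧ x ∉ S := by
    intro x
    simp only [Finset.mem_erase, Finset.mem_sdiff, tupR_mem_graphDB,
      tupR_injective.mem_finset_image, tupR_injective.ne_iff]
    tauto
  have hmemS : ∀ x y, tupS x y ∈ (graphDB V v0 O \ S.image tupR).erase (tupR v0) ↔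
      (x = v0 ∧ y = v0) ∨ (x, y) ∈ O := by
    intro x y
    simp [tupS_mem_graphDB]
  simp only [dbSat_rsrQuery_iff, hmemR, hmemS, not_exists]
  constructor
  · intro h p hp
    by_contra! hpS
    have hp1 : p.1 ≠ v0 := fun he => hv0 (he ▸ (hOV p hp).1)
    have hp2 : p.2 ≠ v0 := fun he => hv0 (he ▸ (hOV p hp).2)
    exact h p.1 p.2 ⟨⟨hp1, (hOV p hp).1, hpS.1⟩, Or.inr hp, hp2, (hOV p hp).2, hpS.2⟩
  · rintro h x y ⟨⟨hx, -, hxS⟩, hxy, -, -, hyS⟩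
    rcases hxy with ⟨rfl, -⟩ | hxy
    · exact hx rfl
    · exact (h _ hxy).elim hxS hyS

theorem isContingencySet_image_tupR_iff {S : Finset α} (hS : S ⊆ V) (hv0 : v0 ∉ V)
    (hOV : ∀ p ∈ O, p.1 ∈ V ∧ p.2 ∈ V) :
    IsContingencySet rsrQuery (graphDB V v0 O) (endoDB V v0) (tupR v0) (S.image tupR) ↔
      ∀ p ∈ O, p.1 ∈ S ∨ p.2 ∈ S := by
  have hsub : S.image tupR ⊆ endoDB V v0 :=
    Finset.image_subset_image (hS.trans (Finset.subset_insert _ _))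
  have hnotMem : tupR v0 ∉ S.image tupR := by
    rw [tupR_injective.mem_finset_image]
    exact fun h => hv0 (hS h)
  have hsat : dbSat (graphDB V v0 O \ S.image tupR) rsrQuery := by
    have hR : tupR v0 ∈ graphDB V v0 O \ S.image tupR :=
      Finset.mem_sdiff.2 ⟨tupR_mem_graphDB.2 (Or.inl rfl), hnotMem⟩
    refine (dbSat_rsrQuery_iff _).2 ⟨v0, v0, hR, Finset.mem_sdiff.2 ⟨?_, ?_⟩, hR⟩
    · exact tupS_mem_graphDB.2 (Or.inl ⟨rfl, rfl⟩)
    · simp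
  simp only [IsContingencySet, hsub, hnotMem, hsat, not_false_eq_true, true_and,
    not_dbSat_erase_iff hv0 hOV]

end VertexCoverReduction

theorem forall_mem_orientation_iff {α : Type} {E : Finset (Sym2 α)}
    {O : Finset (α × α)} (S : Finset α)
    (hO1 : ∀ p ∈ O, Sym2.mk p.1 p.2 ∈ E) (hO2 : ∀ e ∈ E, ∃ p ∈ O, Sym2.mk p.1 p.2 = e) :
    (∀ p ∈ O, p.1 ∈ S ∨ p.2 ∈ S) ↔ ∀ e ∈ E, ∃ v ∈ S, v ∈ e := by
  constructor
  · intro h e he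
    obtain ⟨p, hp, rfl⟩ := hO2 e he
    rcases h p hp with h1 | h2
    · exact ⟨p.1, h1, Sym2.mem_mk_left _ _⟩
    · exact ⟨p.2, h2, Sym2.mem_mk_right _ _⟩
  · intro h p hp
    obtain ⟨v, hvS, hv⟩ := h _ (hO1 p hp)
    rcases Sym2.mem_iff.1 hv with rfl | rfl
    · exact Or.inl hvS
    · exact Or.inr hvS

open VertexCoverReduction in
theorem statement13_general {α : Type} [DecidableEq α]
    (V : Finset α) (E : Finset (Sym2 α))
    (hE : ∀ e ∈ E, ∀ v ∈ e, v ∈ V)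
    (v0 : α) (hv0 : v0 ∉ V)
    (O : Finset (α × α))
    (hO1 : ∀ p ∈ O, Sym2.mk p.1 p.2 ∈ E)
    (hO2 : ∀ e ∈ E, ∃ p ∈ O, Sym2.mk p.1 p.2 = e) :
    let q : Finset (DBAtom (Fin 2) (Fin 2)) :=
      {⟨0, [0], true⟩, ⟨1, [0, 1], false⟩, ⟨0, [1], true⟩}
    let Dn : Finset (DBTup (Fin 2) α) := (insert v0 V).image (fun v => ⟨0, [v]⟩)
    let D : Finset (DBTup (Fin 2) α) :=
      Dn ∪ (insert (v0, v0) O).image (fun p => ⟨1, [p.1, p.2]⟩)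
    let t0 : DBTup (Fin 2) α := ⟨0, [v0]⟩
    sInf {n : ℕ | ∃ Γ : Finset (DBTup (Fin 2) α), Γ ⊆ Dn ∧ t0 ∉ Γ ∧
        dbSat (D \ Γ) q ∧ ¬ dbSat ((D \ Γ).erase t0) q ∧ Γ.card = n} =
      sInf {n : ℕ | ∃ S : Finset α, S ⊆ V ∧ (∀ e ∈ E, ∃ v ∈ S, v ∈ e) ∧ S.card = n} := by
  intro q Dn D t0
  have hOV : ∀ p ∈ O, p.1 ∈ V ∧ p.2 ∈ V := fun p hp =>
    ⟨hE _ (hO1 p hp) _ (Sym2.mem_mk_left _ _), hE _ (hO1 p hp) _ (Sym2.mem_mk_right _ _)⟩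
  congr 1
  ext n
  constructor
  · rintro ⟨Γ, hΓ, ht0, hsat, hunsat, rfl⟩
    obtain ⟨S, hSV, rfl⟩ := exists_eq_image_tupR (V := V) hΓ ht0
    have hcover := (isContingencySet_image_tupR_iff hSV hv0 hOV).1 ⟨hΓ, ht0, hsat, hunsat⟩
    exact ⟨S, hSV, (forall_mem_orientation_iff S hO1 hO2).1 hcover,
      (Finset.card_image_of_injective _ tupR_injective).symm⟩
  · rintro ⟨S, hSV, hcover, rfl⟩
    obtain ⟨hΓ, ht0, hsat, hunsat⟩ := (isContingencySet_image_tupR_iff hSV hv0 hOV).2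
      ((forall_mem_orientation_iff S hO1 hO2).2 hcover)
    exact ⟨S.image tupR, hΓ, ht0, hsat, hunsat, Finset.card_image_of_injective _ tupR_injective⟩

/-- Let `G = (V, E)` be a finite undirected simple graph and `v0 ∉ V`
a fresh element. Consider the Boolean query `q ⟵ R(x), S(x,y), R(y)` (symbols `R, S`
are `0, 1`; variables `x, y` are `0, 1`), with `R` endogenous and `S` exogenous, on the
database instance with `R = V ∪ {v0}` and `S` containing one tuple `(u,v)` for each edge
`{u,v} ∈ E` (in an arbitrary orientation `O`) together with the tuple `(v0,v0)`. Then
the minimum size of a contingency set for the tuple `v0 ∈ R` equals the minimum size of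
a vertex cover of `G`. -/
theorem statement13 {α : Type} [DecidableEq α]
    (V : Finset α) (E : Finset (Sym2 α))
    (hE : ∀ e ∈ E, ∀ v ∈ e, v ∈ V)
    (hsimple : ∀ e ∈ E, ¬ e.IsDiag)
    (v0 : α) (hv0 : v0 ∉ V)
    (O : Finset (α × α))
    (hO1 : ∀ p ∈ O, Sym2.mk p.1 p.2 ∈ E)
    (hO2 : ∀ e ∈ E, ∃ p ∈ O, Sym2.mk p.1 p.2 = e)
    (hO3 : Set.InjOn (fun p : α × α => Sym2.mk p.1 p.2) O) :
    let q : Finset (DBAtom (Fin 2) (Fin 2)) :=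
      {⟨0, [0], true⟩, ⟨1, [0, 1], false⟩, ⟨0, [1], true⟩}
    let Dn : Finset (DBTup (Fin 2) α) := (insert v0 V).image (fun v => ⟨0, [v]⟩)
    let D : Finset (DBTup (Fin 2) α) :=
      Dn ∪ (insert (v0, v0) O).image (fun p => ⟨1, [p.1, p.2]⟩)
    let t0 : DBTup (Fin 2) α := ⟨0, [v0]⟩
    sInf {n : ℕ | ∃ Γ : Finset (DBTup (Fin 2) α), Γ ⊆ Dn ∧ t0 ∉ Γ ∧
        dbSat (D \ Γ) q ∧ ¬ dbSat ((D \ Γ).erase t0) q ∧ Γ.card = n} =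
      sInf {n : ℕ | ∃ S : Finset α, S ⊆ V ∧ (∀ e ∈ E, ∃ v ∈ S, v ∈ e) ∧ S.card = n} :=
  statement13_general V E hE v0 hv0 O hO1 hO2
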